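/- Let ℓ ≥ 1 be an integer and x₀ ∈ ℝ³. Let v : ℝ³ → ℝ³ be given by v(x) = p(x) + (x − x₀) × z(x), where p and z are polynomial vector fields on ℝ³ whose components have total degree at most ℓ−1 (so that v belongs to the Nédélec space NE^ℓ built from the Koszul complement at x₀). Let ν ∈ ℝ³, x_F ∈ ℝ³, and let F = {x ∈ ℝ³ : ⟨x − x_F, ν⟩ = 0} be the corresponding plane. Then there exist a polynomial vector field a : ℝ³ → ℝ³ whose components have total degree at most ℓ−1 and which satisfies ⟨a(x), ν⟩ = 0 for all x ∈ ℝ³, and a real polynomial b of total degree at most ℓ−1, such that v(x) × ν = a(x) + b(x)(x − x_F) for all x ∈ F; i.e., the rotated tangential trace of a Nédélec field on a plane belongs to the planar Raviart–Thomas space RT^ℓ with base point x_F. -/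

import Mathlib

open MvPolynomial
open scoped InnerProductSpace

/-- The cross product of two vectors of `ℝ³` (as elements of `EuclideanSpace ℝ (Fin 3)`). -/
noncomputable def crossVec (a b : EuclideanSpace ℝ (Fin 3)) : EuclideanSpace ℝ (Fin 3) :=
  (WithLp.equiv 2 (Fin 3 → ℝ)).symm
    ![a 1 * b 2 - a 2 * b 1, a 2 * b 0 - a 0 * b 2, a 0 * b 1 - a 1 * b 0]

/-- Evaluation of a polynomial vector field at a point of `ℝ³`. -/
noncomputable def polyVecEval (p : Fin 3 → MvPolynomial (Fin 3) ℝ)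
    (x : EuclideanSpace ℝ (Fin 3)) : EuclideanSpace ℝ (Fin 3) :=
  (WithLp.equiv 2 (Fin 3 → ℝ)).symm fun i => eval (fun j => x j) (p i)

/-!
On the plane `F` write `x - x₀ = (x - x_F) + d` with `d = x_F - x₀`. The vector triple product
`(u × w) × ν = ⟨u, ν⟩ w - ⟨w, ν⟩ u` and `⟨x - x_F, ν⟩ = 0` give
`((x - x₀) × z) × ν = (⟨d, ν⟩ z - ⟨z, ν⟩ d) - ⟨z, ν⟩ (x - x_F)`.
Hence `a = p × ν + ⟨d, ν⟩ z - ⟨z, ν⟩ d` and `b = -⟨z, ν⟩`: both are built from `p` and `z` by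
constant-coefficient linear operations, so they keep the degree bound, and `⟨a, ν⟩ = 0`
because the two `z`-terms cancel against each other.
-/

local notation "ℝ³" => EuclideanSpace ℝ (Fin 3)

section CrossProduct

variable (u w ν : ℝ³)

lemma crossVec_add_left (w' : ℝ³) : crossVec (u + w') ν = crossVec u ν + crossVec w' ν := by
  ext i
  fin_cases i <;> simp [crossVec] <;> ring

lemma inner_crossVec_self_right : ⟪crossVec u ν, ν⟫_ℝ = 0 := by
  simp [crossVec, PiLp.inner_apply, Fin.sum_univ_three]
  ring

lemma crossVec_crossVec : crossVec (crossVec u w) ν = ⟪u, ν⟫_ℝ • w - ⟪w, ν⟫_ℝ • u := by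
  ext i
  fin_cases i <;> simp [crossVec, PiLp.inner_apply, Fin.sum_univ_three] <;> ring

lemma crossVec_crossVec_add_of_inner_eq_zero {y : ℝ³} (hy : ⟪y, ν⟫_ℝ = 0) (d : ℝ³) :
    crossVec (crossVec (y + d) w) ν = (⟪d, ν⟫_ℝ • w - ⟪w, ν⟫_ℝ • d) + (-⟪w, ν⟫_ℝ) • y := by
  rw [crossVec_crossVec, inner_add_left, hy, zero_add]
  module

end CrossProduct

section PolynomialVectorFields

noncomputable def polyVecCross (q : Fin 3 → MvPolynomial (Fin 3) ℝ) (ν : ℝ³) :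
    Fin 3 → MvPolynomial (Fin 3) ℝ :=
  ![ν 2 • q 1 - ν 1 • q 2, ν 0 • q 2 - ν 2 • q 0, ν 1 • q 0 - ν 0 • q 1]

noncomputable def polyVecInner (q : Fin 3 → MvPolynomial (Fin 3) ℝ) (ν : ℝ³) :
    MvPolynomial (Fin 3) ℝ :=
  ∑ i, ν i • q i

variable (q r : Fin 3 → MvPolynomial (Fin 3) ℝ) (x : ℝ³)

lemma polyVecEval_add : polyVecEval (q + r) x = polyVecEval q x + polyVecEval r x := by
  ext i
  simp [polyVecEval]

lemma polyVecEval_sub : polyVecEval (q - r) x = polyVecEval q x - polyVecEval r x := by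
  ext i
  simp [polyVecEval]

lemma polyVecEval_smul (c : ℝ) : polyVecEval (c • q) x = c • polyVecEval q x := by
  ext i
  simp [polyVecEval, smul_eval]

lemma polyVecEval_smul_const (s : MvPolynomial (Fin 3) ℝ) (d : ℝ³) :
    polyVecEval (fun i => d i • s) x = eval (fun j => x j) s • d := by
  ext i
  simp [polyVecEval, smul_eval, mul_comm]

lemma polyVecEval_polyVecCross (ν : ℝ³) :
    polyVecEval (polyVecCross q ν) x = crossVec (polyVecEval q x) ν := by
  ext i
  fin_cases i <;> simp [polyVecEval, polyVecCross, crossVec, smul_eval] <;> ring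

lemma eval_polyVecInner (ν : ℝ³) :
    eval (fun j => x j) (polyVecInner q ν) = ⟪polyVecEval q x, ν⟫_ℝ := by
  simp [polyVecInner, polyVecEval, PiLp.inner_apply, smul_eval]

variable {q} {n : ℕ}

lemma polyVecCross_mem_restrictTotalDegree (hq : ∀ i, q i ∈ restrictTotalDegree (Fin 3) ℝ n)
    (ν : ℝ³) (i : Fin 3) :
    polyVecCross q ν i ∈ restrictTotalDegree (Fin 3) ℝ n := by
  fin_cases i <;>
    exact Submodule.sub_mem _ (Submodule.smul_mem _ _ (hq _)) (Submodule.smul_mem _ _ (hq _))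

lemma polyVecInner_mem_restrictTotalDegree (hq : ∀ i, q i ∈ restrictTotalDegree (Fin 3) ℝ n)
    (ν : ℝ³) :
    polyVecInner q ν ∈ restrictTotalDegree (Fin 3) ℝ n :=
  Submodule.sum_mem _ fun i _ => Submodule.smul_mem _ _ (hq i)

end PolynomialVectorFields

theorem nedelec_rotated_tangential_trace_on_plane_general (ℓ : ℕ)
    (x₀ : EuclideanSpace ℝ (Fin 3))
    (p z : Fin 3 → MvPolynomial (Fin 3) ℝ)
    (hp : ∀ i, (p i).totalDegree ≤ ℓ - 1) (hz : ∀ i, (z i).totalDegree ≤ ℓ - 1)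
    (ν xF : EuclideanSpace ℝ (Fin 3)) :
    ∃ a : Fin 3 → MvPolynomial (Fin 3) ℝ, ∃ b : MvPolynomial (Fin 3) ℝ,
      (∀ i, (a i).totalDegree ≤ ℓ - 1) ∧
      (∀ x : EuclideanSpace ℝ (Fin 3), ⟪polyVecEval a x, ν⟫_ℝ = 0) ∧
      b.totalDegree ≤ ℓ - 1 ∧
      ∀ x : EuclideanSpace ℝ (Fin 3), ⟪x - xF, ν⟫_ℝ = 0 →
        crossVec (polyVecEval p x + crossVec (x - x₀) (polyVecEval z x)) ν
          = polyVecEval a x + (eval (fun j => x j) b) • (x - xF) := by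
  simp only [← mem_restrictTotalDegree] at hp hz ⊢
  set d := xF - x₀
  set w := polyVecInner z ν
  have hw : w ∈ restrictTotalDegree (Fin 3) ℝ (ℓ - 1) := polyVecInner_mem_restrictTotalDegree hz ν
  refine ⟨polyVecCross p ν + ⟪d, ν⟫_ℝ • z - fun i => d i • w, -w, fun i => ?_, fun x => ?_,
    neg_mem hw, fun x hx => ?_⟩
  · exact sub_mem (add_mem (polyVecCross_mem_restrictTotalDegree hp ν i) (Submodule.smul_mem _ _ (hz i)))
      (Submodule.smul_mem _ _ hw)
  · rw [polyVecEval_sub, polyVecEval_add, polyVecEval_smul, polyVecEval_smul_const,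
      polyVecEval_polyVecCross, eval_polyVecInner, inner_sub_left, inner_add_left,
      inner_crossVec_self_right, real_inner_smul_left, real_inner_smul_left]
    ring
  · have hsplit : x - x₀ = (x - xF) + d := by simp [d]
    rw [crossVec_add_left, hsplit, crossVec_crossVec_add_of_inner_eq_zero _ _ hx, polyVecEval_sub,
      polyVecEval_add, polyVecEval_smul, polyVecEval_smul_const, polyVecEval_polyVecCross, map_neg,
      eval_polyVecInner]
    abel

/-- The rotated tangential trace of a Nédélec field on a plane belongs to the
planar Raviart–Thomas space: if `v(x) = p(x) + (x − x₀) × z(x)` with `p`, `z` of component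
degree `≤ ℓ−1`, and `F = {x : ⟨x − x_F, ν⟩ = 0}`, then there are a polynomial vector field `a`
of component degree `≤ ℓ−1` that is everywhere orthogonal to `ν` and a polynomial `b` of total
degree `≤ ℓ−1` such that `v(x) × ν = a(x) + b(x)(x − x_F)` for all `x ∈ F`. -/
theorem nedelec_rotated_tangential_trace_on_plane (ℓ : ℕ) (hℓ : 1 ≤ ℓ)
    (x₀ : EuclideanSpace ℝ (Fin 3))
    (p z : Fin 3 → MvPolynomial (Fin 3) ℝ)
    (hp : ∀ i, (p i).totalDegree ≤ ℓ - 1) (hz : ∀ i, (z i).totalDegree ≤ ℓ - 1)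
    (ν xF : EuclideanSpace ℝ (Fin 3)) :
    ∃ a : Fin 3 → MvPolynomial (Fin 3) ℝ, ∃ b : MvPolynomial (Fin 3) ℝ,
      (∀ i, (a i).totalDegree ≤ ℓ - 1) ∧
      (∀ x : EuclideanSpace ℝ (Fin 3), ⟪polyVecEval a x, ν⟫_ℝ = 0) ∧
      b.totalDegree ≤ ℓ - 1 ∧
      ∀ x : EuclideanSpace ℝ (Fin 3), ⟪x - xF, ν⟫_ℝ = 0 →
        crossVec (polyVecEval p x + crossVec (x - x₀) (polyVecEval z x)) ν
          = polyVecEval a x + (eval (fun j => x j) b) • (x - xF) :=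
  nedelec_rotated_tangential_trace_on_plane_general ℓ x₀ p z hp hz ν xF
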